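/- arXiv:2507.13284 — 4 statements merged into one kernel-verified Lean document; each statement's English description precedes it below -/
import Mathlib

section
/- The characteristic polynomial of the (N+2)×(N+2) matrix A(u) with first row (0,1,0,...,0), second row (gh - u² - Σᵢ αᵢ²/(2i+1), 2u, 2α₁/3, ..., 2α_N/(2N+1)), and for i=1,...,N, row i+2 equal to (-2uαᵢ, 2αᵢ, 0,...,0,u,0,...,0) with u in the (i+2)-th diagonal position, is P(λ) = (u-λ)^N · [(λ-u)² - gh - Σᵢ₌₁^N 3αᵢ²/(2i+1)]. -/
/-!
Subtracting `2 αᵢ` times the first row of `A - λ I` from row `i + 2` turns the first two entries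
of that row into `(-2 (u - λ) αᵢ, 0)`, so all rows below the second become divisible by `u - λ`.
Factoring `u - λ` out of them leaves a bordered matrix with identity lower-right block, whose
determinant is that of the `2 × 2` Schur complement
`[[-λ, 1], [gh - u² + Σᵢ 3αᵢ²/(2i+1), 2u - λ]]`.
-/

open Finset

/-- The Jacobian matrix of the shallow water linearized moment equations with `N` moments.
Moment coefficients are `α 1, …, α N`. -/
noncomputable def swlmeJacobian (N : ℕ) (g h u : ℝ) (α : ℕ → ℝ) :
    Matrix (Fin (N + 2)) (Fin (N + 2)) ℝ :=
  Matrix.of fun i j =>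
    if i.val = 0 then (if j.val = 1 then 1 else 0)
    else if i.val = 1 then
      if j.val = 0 then
        g * h - u ^ 2 - ∑ k ∈ Finset.range N, (α (k + 1)) ^ 2 / (2 * (k : ℝ) + 3)
      else if j.val = 1 then 2 * u
      else 2 * α (j.val - 1) / (2 * ((j.val : ℝ) - 1) + 1)
    else
      if j.val = 0 then -2 * u * α (i.val - 1)
      else if j.val = 1 then 2 * α (i.val - 1)
      else if j = i then u else 0

namespace Matrix

variable {m n R : Type*} [Fintype m] [Fintype n] [DecidableEq m] [DecidableEq n] [CommRing R]

theorem det_fromBlocks_smul_smul_one (A : Matrix m m R) (B : Matrix m n R) (K : Matrix n m R)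
    (s : R) :
    (fromBlocks A B (s • K) (s • 1)).det = s ^ Fintype.card n * (A - B * K).det := by
  have hfactor :
      fromBlocks A B (s • K) (s • 1) = fromBlocks 1 0 0 (s • 1) * fromBlocks A B K 1 := by
    simp [fromBlocks_multiply]
  rw [hfactor, det_mul, det_fromBlocks_zero₂₁, det_fromBlocks_one₂₂, det_smul]
  simp

theorem det_fromBlocks_mul_sub_smul_one (A : Matrix m m R) (B : Matrix m n R)
    (Y : Matrix n m R) (s : R) (hYB : Y * B = 0) :
    (fromBlocks A B (Y * (A - s • 1)) (s • 1)).det = s ^ Fintype.card n * (A + B * Y).det := by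
  have hfactor : fromBlocks A B (Y * (A - s • 1)) (s • 1) =
      fromBlocks 1 0 Y 1 * fromBlocks A B (s • -Y) (s • 1) := by
    simp [fromBlocks_multiply, hYB, Matrix.mul_sub, ← sub_eq_add_neg]
  rw [hfactor, det_mul, det_fromBlocks_zero₁₂, det_fromBlocks_smul_smul_one]
  simp

end Matrix

open Matrix

def finSumFinEquivAddComm (m n : ℕ) : Fin m ⊕ Fin n ≃ Fin (n + m) :=
  finSumFinEquiv.trans (finCongr (Nat.add_comm m n))

@[simp]
theorem finSumFinEquivAddComm_inl_val (m n : ℕ) (k : Fin m) :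
    (finSumFinEquivAddComm m n (.inl k) : ℕ) = k :=
  rfl

@[simp]
theorem finSumFinEquivAddComm_inr_val (m n : ℕ) (j : Fin n) :
    (finSumFinEquivAddComm m n (.inr j) : ℕ) = j + m := by
  simp [finSumFinEquivAddComm, Nat.add_comm]

theorem swlmeJacobian_sub_smul_one_submatrix (N : ℕ) (g h u : ℝ) (α : ℕ → ℝ) (lam : ℝ) :
    (swlmeJacobian N g h u α - lam • 1).submatrix
        (finSumFinEquivAddComm 2 N) (finSumFinEquivAddComm 2 N) =
      fromBlocks
        !![-lam, 1; g * h - u ^ 2 - ∑ k ∈ range N, α (k + 1) ^ 2 / (2 * (k : ℝ) + 3), 2 * u - lam]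
        (of ![0, fun j : Fin N => 2 * α (j + 1) / (2 * (j : ℝ) + 3)])
        (of fun j : Fin N => ![-2 * u * α (j + 1), 2 * α (j + 1)]) ((u - lam) • 1) := by
  ext (i | i) (j | j) <;>
    simp only [swlmeJacobian, Matrix.sub_apply, Matrix.smul_apply, submatrix_apply, of_apply,
      one_apply, EmbeddingLike.apply_eq_iff_eq, finSumFinEquivAddComm_inl_val,
      finSumFinEquivAddComm_inr_val]
  · fin_cases i <;> fin_cases j <;> simp
  · have hden : 2 * ((j : ℝ) + 2 - 1) + 1 = 2 * j + 3 := by ring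
    fin_cases i <;> simp [hden]
  · fin_cases j <;> simp
  · by_cases hij : i = j <;> simp [hij, eq_comm]

theorem swlme_charpoly_general (N : ℕ) (g h u : ℝ) (α : ℕ → ℝ) (lam : ℝ) :
    (swlmeJacobian N g h u α - lam • (1 : Matrix (Fin (N + 2)) (Fin (N + 2)) ℝ)).det =
      (u - lam) ^ N *
        ((lam - u) ^ 2 - g * h -
          ∑ k ∈ Finset.range N, 3 * (α (k + 1)) ^ 2 / (2 * (k : ℝ) + 3)) := by
  set A : Matrix (Fin 2) (Fin 2) ℝ :=
    !![-lam, 1; g * h - u ^ 2 - ∑ k ∈ range N, α (k + 1) ^ 2 / (2 * (k : ℝ) + 3), 2 * u - lam]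
  set B : Matrix (Fin 2) (Fin N) ℝ := of ![0, fun j => 2 * α (j + 1) / (2 * (j : ℝ) + 3)]
  set Y : Matrix (Fin N) (Fin 2) ℝ := of fun j => ![2 * α (j + 1), 0]
  have hC : of (fun j : Fin N => ![-2 * u * α (j + 1), 2 * α (j + 1)]) =
      Y * (A - (u - lam) • 1) := by
    ext j k; fin_cases k <;> simp [A, Y, mul_apply, Fin.sum_univ_two]; ring
  have hYB : Y * B = 0 := by
    ext j k; simp [Y, B, mul_apply, Fin.sum_univ_two]
  have hBY : B * Y = !![0, 0; ∑ k ∈ range N, 4 * α (k + 1) ^ 2 / (2 * (k : ℝ) + 3), 0] := by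
    ext i k
    fin_cases i <;> fin_cases k <;> simp [B, Y, mul_apply, ← Fin.sum_univ_eq_sum_range]
    exact sum_congr rfl fun j _ => by ring
  have hsum : ∑ k ∈ range N, α (k + 1) ^ 2 / (2 * (k : ℝ) + 3) +
      ∑ k ∈ range N, 3 * α (k + 1) ^ 2 / (2 * (k : ℝ) + 3) =
      ∑ k ∈ range N, 4 * α (k + 1) ^ 2 / (2 * (k : ℝ) + 3) := by
    rw [← sum_add_distrib]
    exact sum_congr rfl fun k _ => by ring
  rw [← det_submatrix_equiv_self (finSumFinEquivAddComm 2 N),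
    swlmeJacobian_sub_smul_one_submatrix, hC, det_fromBlocks_mul_sub_smul_one A B Y _ hYB,
    Fintype.card_fin, hBY, det_fin_two]
  congr 1
  simp [A]
  linear_combination hsum

/-- The characteristic polynomial of the SWLME Jacobian is
`P(λ) = (u - λ)^N ((λ - u)² - gh - Σᵢ 3αᵢ²/(2i+1))`. -/
theorem swlme_charpoly (N : ℕ) (hN : 1 ≤ N) (g h u : ℝ) (α : ℕ → ℝ) (lam : ℝ) :
    (swlmeJacobian N g h u α - lam • (1 : Matrix (Fin (N + 2)) (Fin (N + 2)) ℝ)).det =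
      (u - lam) ^ N *
        ((lam - u) ^ 2 - g * h -
          ∑ k ∈ Finset.range N, 3 * (α (k + 1)) ^ 2 / (2 * (k : ℝ) + 3)) :=
  swlme_charpoly_general N g h u α lam
end

section
/- If h > 0 and g > 0, the matrix A(u) of the shallow water linearized moment equations has N+2 real eigenvalues: λ₁ = u + √(gh + Σᵢ₌₁^N 3αᵢ²/(2i+1)), λ₂ = u - √(gh + Σᵢ₌₁^N 3αᵢ²/(2i+1)), and λ = u with multiplicity N; in particular λ₁ > u > λ₂, so the system is hyperbolic with distinct extremal eigenvalues. -/
open Finset Polynomial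

/-!
Split the Jacobian into the blocks of the variables `(h, hu)` and of the moments
`(hα₁, …, hα_N)`. The moment block is `u • 1`, and conjugating by the unipotent block matrix
`[[1, 0], [K, 1]]` with `K = -2 α e₀ᵀ` clears the lower-left block, because the first row of the
upper-left block is `e₁ᵀ`. What remains is block triangular: the moments contribute the
eigenvalue `u` `N` times, and the `(h, hu)` block becomes the companion matrix of
`(λ - u)² - (gh + Σ 3αᵢ²/(2i+1))`, whose roots are `u ± √(gh + Σ 3αᵢ²/(2i+1))`, real and distinct
since `gh > 0`.
-/

open Matrix

theorem Matrix.charpoly_fromBlocks_of_intertwine {m n R : Type*} [Fintype m] [Fintype n]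
    [DecidableEq m] [DecidableEq n] [CommRing R]
    (A : Matrix m m R) (B : Matrix m n R) (C : Matrix n m R) (D : Matrix n n R)
    (K : Matrix n m R) (hK : K * A + C = D * K + K * B * K) :
    (fromBlocks A B C D).charpoly = (A - B * K).charpoly * (D + K * B).charpoly := by
  have hinv : fromBlocks 1 0 (-K) 1 * fromBlocks 1 0 K 1 = (1 : Matrix (m ⊕ n) (m ⊕ n) R) := by
    simp [fromBlocks_multiply, fromBlocks_one]
  have hconj : fromBlocks 1 0 K 1 * fromBlocks A B C D * fromBlocks 1 0 (-K) 1 =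
      fromBlocks (A - B * K) B 0 (D + K * B) := by
    simp only [fromBlocks_multiply]
    congr 1
    · simp [sub_eq_add_neg]
    · simp
    · simp only [Matrix.one_mul, Matrix.mul_one, Matrix.mul_neg, Matrix.add_mul, hK]
      abel
    · simp [add_comm]
  rw [← charpoly_fromBlocks_zero₂₁, ← hconj, charpoly_mul_comm, ← Matrix.mul_assoc, hinv,
    Matrix.one_mul]

theorem Matrix.charpoly_fin_two_of_sq_eq {R : Type*} [CommRing R] [Nontrivial R] {c u r : R}
    (hr : r ^ 2 = c + u ^ 2) :
    !![0, 1; c, 2 * u].charpoly = (X - C (u + r)) * (X - C (u - r)) := by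
  obtain rfl : c = r ^ 2 - u ^ 2 := eq_sub_of_add_eq hr.symm
  rw [charpoly_fin_two, trace_fin_two_of, det_fin_two_of]
  simp only [map_sub, map_add, map_mul, map_pow, map_zero, map_one, map_ofNat]
  ring

section Blocks

variable {n R : Type*} [Fintype n] [DecidableEq n] [CommRing R]

def swlmeBlocks (c u : R) (a b : n → R) : Matrix (Fin 2 ⊕ n) (Fin 2 ⊕ n) R :=
  fromBlocks !![0, 1; c, 2 * u] (of ![0, b]) (of fun k => ![-2 * u * a k, 2 * a k]) (scalar n u)

theorem charpoly_swlmeBlocks (c u : R) (a b : n → R) :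
    (swlmeBlocks c u a b).charpoly =
      !![0, 1; c + 2 * (b ⬝ᵥ a), 2 * u].charpoly * (X - C u) ^ Fintype.card n := by
  set K : Matrix n (Fin 2) R := of fun k => ![-2 * a k, 0]
  have hKB : K * of ![0, b] = 0 := by
    ext k l
    simp [K, mul_apply, Fin.sum_univ_two]
  have hK : K * !![0, 1; c, 2 * u] + of (fun k => ![-2 * u * a k, 2 * a k]) =
      scalar n u * K + K * of ![0, b] * K := by
    rw [hKB, Matrix.zero_mul, add_zero, scalar_apply, ← smul_eq_diagonal_mul]
    ext k j
    fin_cases j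
    · simp [K, mul_apply, Fin.sum_univ_two]
      ring
    · simp [K, mul_apply, Fin.sum_univ_two]
  have hBK : !![0, 1; c, 2 * u] - of ![0, b] * K = !![0, 1; c + 2 * (b ⬝ᵥ a), 2 * u] := by
    ext i j
    fin_cases i <;> fin_cases j <;> simp [K, vecMul, dotProduct, Finset.mul_sum, mul_left_comm]
  rw [swlmeBlocks, charpoly_fromBlocks_of_intertwine _ _ _ _ K hK, hBK, hKB, add_zero,
    scalar_apply, charpoly_diagonal, Finset.prod_const, Finset.card_univ]

end Blocks

def finAddTwoEquivSum (N : ℕ) : Fin (N + 2) ≃ Fin 2 ⊕ Fin N :=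
  (finCongr (add_comm N 2)).trans finSumFinEquiv.symm

theorem swlmeJacobian_reindex (N : ℕ) (g h u : ℝ) (α : ℕ → ℝ) :
    reindex (finAddTwoEquivSum N) (finAddTwoEquivSum N) (swlmeJacobian N g h u α) =
      swlmeBlocks (g * h - u ^ 2 - ∑ k ∈ range N, α (k + 1) ^ 2 / (2 * (k : ℝ) + 3)) u
        (fun k : Fin N => α (k + 1)) (fun k : Fin N => 2 * α (k + 1) / (2 * (k : ℝ) + 3)) := by
  ext (i | k) (j | l) <;>
    simp only [reindex_apply, submatrix_apply, swlmeBlocks, fromBlocks_apply₁₁,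
      fromBlocks_apply₁₂, fromBlocks_apply₂₁, fromBlocks_apply₂₂]
  · fin_cases i <;> fin_cases j <;> simp [swlmeJacobian, finAddTwoEquivSum, -Fin.val_eq_zero_iff]
  · fin_cases i <;> simp [swlmeJacobian, finAddTwoEquivSum, -Fin.val_eq_zero_iff]
    ring_nf
  · fin_cases j <;> simp [swlmeJacobian, finAddTwoEquivSum, -Fin.val_eq_zero_iff]
  · simp [swlmeJacobian, finAddTwoEquivSum, -Fin.val_eq_zero_iff, scalar_apply, diagonal_apply,
      eq_comm]

theorem swlme_coeff_add_two_mul_dotProduct (N : ℕ) (g h u : ℝ) (α : ℕ → ℝ) :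
    g * h - u ^ 2 - ∑ k ∈ range N, α (k + 1) ^ 2 / (2 * (k : ℝ) + 3) +
        2 * ((fun k : Fin N => 2 * α (k + 1) / (2 * (k : ℝ) + 3)) ⬝ᵥ
          fun k : Fin N => α (k + 1)) =
      g * h + ∑ k ∈ range N, 3 * α (k + 1) ^ 2 / (2 * (k : ℝ) + 3) - u ^ 2 := by
  have hsum : ∑ k ∈ range N, 3 * α (k + 1) ^ 2 / (2 * (k : ℝ) + 3) =
      2 * ∑ k ∈ range N, 2 * α (k + 1) / (2 * (k : ℝ) + 3) * α (k + 1) -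
        ∑ k ∈ range N, α (k + 1) ^ 2 / (2 * (k : ℝ) + 3) := by
    rw [Finset.mul_sum, ← Finset.sum_sub_distrib]
    exact Finset.sum_congr rfl fun k _ => by ring
  rw [hsum, dotProduct, Fin.sum_univ_eq_sum_range
    (fun k => 2 * α (k + 1) / (2 * (k : ℝ) + 3) * α (k + 1))]
  ring

theorem swlme_hyperbolic_general (N : ℕ) (g h u : ℝ) (hg : 0 < g) (hh : 0 < h)
    (α : ℕ → ℝ) :
    (swlmeJacobian N g h u α).charpoly =
        (X - C (u + Real.sqrt (g * h + ∑ k ∈ Finset.range N,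
            3 * (α (k + 1)) ^ 2 / (2 * (k : ℝ) + 3)))) *
        (X - C (u - Real.sqrt (g * h + ∑ k ∈ Finset.range N,
            3 * (α (k + 1)) ^ 2 / (2 * (k : ℝ) + 3)))) *
        (X - C u) ^ N ∧
      u + Real.sqrt (g * h + ∑ k ∈ Finset.range N,
          3 * (α (k + 1)) ^ 2 / (2 * (k : ℝ) + 3)) > u ∧
      u > u - Real.sqrt (g * h + ∑ k ∈ Finset.range N,
          3 * (α (k + 1)) ^ 2 / (2 * (k : ℝ) + 3)) := by
  set s := g * h + ∑ k ∈ range N, 3 * α (k + 1) ^ 2 / (2 * (k : ℝ) + 3)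
  have hs : 0 < s := by positivity
  have hsqrt : 0 < √s := Real.sqrt_pos.2 hs
  have hr : √s ^ 2 = s - u ^ 2 + u ^ 2 := by rw [Real.sq_sqrt hs.le, sub_add_cancel]
  refine ⟨?_, by linarith, by linarith⟩
  rw [← charpoly_reindex (finAddTwoEquivSum N), swlmeJacobian_reindex, charpoly_swlmeBlocks,
    Fintype.card_fin, swlme_coeff_add_two_mul_dotProduct, charpoly_fin_two_of_sq_eq hr]

/-- If `h > 0` and `g > 0`, the SWLME Jacobian has the `N + 2` real eigenvalues
`λ₁ = u + √(gh + Σ 3αᵢ²/(2i+1))`, `λ₂ = u - √(gh + Σ 3αᵢ²/(2i+1))` and `u` with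
multiplicity `N`, and `λ₁ > u > λ₂`: the system is hyperbolic. -/
theorem swlme_hyperbolic (N : ℕ) (hN : 1 ≤ N) (g h u : ℝ) (hg : 0 < g) (hh : 0 < h)
    (α : ℕ → ℝ) :
    (swlmeJacobian N g h u α).charpoly =
        (X - C (u + Real.sqrt (g * h + ∑ k ∈ Finset.range N,
            3 * (α (k + 1)) ^ 2 / (2 * (k : ℝ) + 3)))) *
        (X - C (u - Real.sqrt (g * h + ∑ k ∈ Finset.range N,
            3 * (α (k + 1)) ^ 2 / (2 * (k : ℝ) + 3)))) *
        (X - C u) ^ N ∧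
      u + Real.sqrt (g * h + ∑ k ∈ Finset.range N,
          3 * (α (k + 1)) ^ 2 / (2 * (k : ℝ) + 3)) > u ∧
      u > u - Real.sqrt (g * h + ∑ k ∈ Finset.range N,
          3 * (α (k + 1)) ^ 2 / (2 * (k : ℝ) + 3)) :=
  swlme_hyperbolic_general N g h u hg hh α
end

section
/- Suppose h, u_m, α₁,...,α_N, b are smooth functions on an interval satisfying the moving water equilibrium conditions: h·u_m = constant, E := u_m²/2 + g(h+b) + (3/2)Σᵢ₌₁^N αᵢ²/(2i+1) = constant, and αᵢ/h = constant for each i. Then these functions form a steady-state solution of the SWLME, i.e., ∂ₓ f(u) + G(u)∂ₓ u = s(u,b), where f, G, s are as defined for the SWLME. -/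
/-!
With `αᵢ = cᵢ h`, the higher-moment terms collapse to multiples of powers of `h`:
`Σᵢ αᵢ²/(2i+1) = C h²` and `Σᵢ h αᵢ²/(2i+1) = C h³`. The momentum flux derivative then
splits as `u_m (h u_m)ₓ + h Eₓ - g h bₓ`, and the moment equations reduce to
`2 cᵢ (h u_m) hₓ - u_m · 2 cᵢ h hₓ = 0`; both vanish because `h u_m` and `E` are constant.
-/

open Finset

theorem HasDerivAt.eq_zero_of_forall_eq_const {f : ℝ → ℝ} {f' c x : ℝ} (hf : HasDerivAt f f' x)
    (hc : ∀ y, f y = c) : f' = 0 := by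
  obtain rfl : f = fun _ => c := funext hc
  exact hf.unique (hasDerivAt_const x c)

theorem deriv_eq_zero_of_forall_eq_const {f : ℝ → ℝ} {c : ℝ} (hc : ∀ y, f y = c) (x : ℝ) :
    deriv f x = 0 := by
  rw [show f = fun _ => c from funext hc, deriv_const]

theorem sum_sq_div_eq_of_proportional {ι : Type*} {s : Finset ι} {a : ι → ℝ → ℝ} {h : ℝ → ℝ}
    {c : ι → ℝ} (w : ι → ℝ) (ha : ∀ i ∈ s, ∀ x, a i x = c i * h x) (x : ℝ) :
    ∑ i ∈ s, a i x ^ 2 / w i = (∑ i ∈ s, c i ^ 2 / w i) * h x ^ 2 := by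
  rw [sum_mul]
  refine sum_congr rfl fun i hi => ?_
  rw [ha i hi x]
  ring

section MovingWater

variable {h u b : ℝ → ℝ} {g q : ℝ}

theorem deriv_momentum_flux_of_moving_water {C E : ℝ} (hh : Differentiable ℝ h)
    (hu : Differentiable ℝ u) (hb : Differentiable ℝ b) (hq : ∀ x, h x * u x = q)
    (hE : ∀ x, u x ^ 2 / 2 + g * (h x + b x) + 3 / 2 * (C * h x ^ 2) = E) (x : ℝ) :
    deriv (fun y => h y * u y ^ 2 + g * h y ^ 2 / 2 + C * h y ^ 3) x = -(g * h x * deriv b x) := by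
  have dh := (hh x).hasDerivAt
  have du := (hu x).hasDerivAt
  have db := (hb x).hasDerivAt
  have hmass := (dh.mul du).eq_zero_of_forall_eq_const hq
  have henergy := ((((du.pow 2).div_const 2).add ((dh.add db).const_mul g)).add
    (((dh.pow 2).const_mul C).const_mul (3 / 2))).eq_zero_of_forall_eq_const hE
  have dflux : HasDerivAt (fun y => h y * u y ^ 2 + g * h y ^ 2 / 2 + C * h y ^ 3) _ x :=
    ((dh.mul (du.pow 2)).add (((dh.pow 2).const_mul g).div_const 2)).add ((dh.pow 3).const_mul C)
  rw [dflux.deriv]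
  norm_num at henergy ⊢
  linear_combination u x * hmass + h x * henergy

theorem deriv_moment_flux_sub_of_moving_water {a : ℝ → ℝ} {c : ℝ} (hh : Differentiable ℝ h)
    (hq : ∀ x, h x * u x = q) (ha : ∀ x, a x = c * h x) (x : ℝ) :
    deriv (fun y => 2 * h y * u y * a y) x - u x * deriv (fun y => h y * a y) x = 0 := by
  have hflux : (fun y => 2 * h y * u y * a y) = fun y => 2 * c * q * h y := by
    funext y
    rw [ha, ← hq y]
    ring
  have hmoment : (fun y => h y * a y) = fun y => c * h y ^ 2 := by
    funext y
    rw [ha]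
    ring
  have dh := (hh x).hasDerivAt
  rw [hflux, hmoment, (dh.const_mul _).deriv, ((dh.fun_pow 2).const_mul c).deriv, ← hq x]
  ring

end MovingWater

theorem swlme_moving_water_steady_state_general
    (N : ℕ) (g : ℝ)
    (h um b : ℝ → ℝ) (α : ℕ → ℝ → ℝ)
    (hh : Differentiable ℝ h) (hum : Differentiable ℝ um) (hb : Differentiable ℝ b)
    (hpos : ∀ x, 0 < h x)
    (hdis : ∃ c : ℝ, ∀ x, h x * um x = c)
    (hE : ∃ c : ℝ, ∀ x,
      (um x) ^ 2 / 2 + g * (h x + b x) +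
        (3 / 2) * ∑ i ∈ Finset.range N, (α (i + 1) x) ^ 2 / (2 * (i : ℝ) + 3) = c)
    (hratio : ∀ i ∈ Finset.range N, ∃ c : ℝ, ∀ x, α (i + 1) x / h x = c) :
    -- first equation: (h u_m)ₓ = 0
    (∀ x, deriv (fun y => h y * um y) x = 0) ∧
    -- momentum equation: (h u_m² + g h²/2 + Σᵢ h αᵢ²/(2i+1))ₓ = -g h bₓ
    (∀ x, deriv (fun y => h y * (um y) ^ 2 + g * (h y) ^ 2 / 2 +
        ∑ i ∈ Finset.range N, h y * (α (i + 1) y) ^ 2 / (2 * (i : ℝ) + 3)) x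
      = -(g * h x * deriv b x)) ∧
    -- moment equations: (2 h u_m αᵢ)ₓ - u_m (h αᵢ)ₓ = 0
    (∀ i ∈ Finset.range N, ∀ x,
      deriv (fun y => 2 * h y * um y * α (i + 1) y) x -
        um x * deriv (fun y => h y * α (i + 1) y) x = 0) := by
  obtain ⟨q, hq⟩ := hdis
  obtain ⟨E, hE⟩ := hE
  choose! c hc using hratio
  have hprop : ∀ i ∈ range N, ∀ x, α (i + 1) x = c i * h x :=
    fun i hi x => (div_eq_iff (hpos x).ne').1 (hc i hi x)
  have hsum := sum_sq_div_eq_of_proportional (fun i : ℕ => 2 * (i : ℝ) + 3) hprop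
  refine ⟨deriv_eq_zero_of_forall_eq_const hq, fun x => ?_,
    fun i hi => deriv_moment_flux_sub_of_moving_water hh hq (hprop i hi)⟩
  have hflux : (fun y => h y * um y ^ 2 + g * h y ^ 2 / 2 +
      ∑ i ∈ range N, h y * α (i + 1) y ^ 2 / (2 * (i : ℝ) + 3)) =
      fun y => h y * um y ^ 2 + g * h y ^ 2 / 2 +
        (∑ i ∈ range N, c i ^ 2 / (2 * (i : ℝ) + 3)) * h y ^ 3 := by
    funext y
    simp_rw [mul_div_assoc, ← mul_sum, hsum]
    ring
  rw [hflux]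
  exact deriv_momentum_flux_of_moving_water hh hum hb hq (fun y => hsum y ▸ hE y) x

/-- Moving water equilibria are steady states of the SWLME: if `h·u_m`, the energy
`E = u_m²/2 + g(h+b) + (3/2)Σᵢ αᵢ²/(2i+1)` and all ratios `αᵢ/h` are constant, then
`∂ₓ f(u) + G(u) ∂ₓ u = s(u, b)` holds componentwise. -/
theorem swlme_moving_water_steady_state
    (N : ℕ) (hN : 1 ≤ N) (g : ℝ) (hg : 0 < g)
    (h um b : ℝ → ℝ) (α : ℕ → ℝ → ℝ)
    (hh : Differentiable ℝ h) (hum : Differentiable ℝ um) (hb : Differentiable ℝ b)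
    (hα : ∀ i, Differentiable ℝ (α i))
    (hpos : ∀ x, 0 < h x)
    (hdis : ∃ c : ℝ, ∀ x, h x * um x = c)
    (hE : ∃ c : ℝ, ∀ x,
      (um x) ^ 2 / 2 + g * (h x + b x) +
        (3 / 2) * ∑ i ∈ Finset.range N, (α (i + 1) x) ^ 2 / (2 * (i : ℝ) + 3) = c)
    (hratio : ∀ i ∈ Finset.range N, ∃ c : ℝ, ∀ x, α (i + 1) x / h x = c) :
    -- first equation: (h u_m)ₓ = 0
    (∀ x, deriv (fun y => h y * um y) x = 0) ∧
    -- momentum equation: (h u_m² + g h²/2 + Σᵢ h αᵢ²/(2i+1))ₓ = -g h bₓ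
    (∀ x, deriv (fun y => h y * (um y) ^ 2 + g * (h y) ^ 2 / 2 +
        ∑ i ∈ Finset.range N, h y * (α (i + 1) y) ^ 2 / (2 * (i : ℝ) + 3)) x
      = -(g * h x * deriv b x)) ∧
    -- moment equations: (2 h u_m αᵢ)ₓ - u_m (h αᵢ)ₓ = 0
    (∀ i ∈ Finset.range N, ∀ x,
      deriv (fun y => 2 * h y * um y * α (i + 1) y) x -
        um x * deriv (fun y => h y * α (i + 1) y) x = 0) :=
  swlme_moving_water_steady_state_general N g h um b α hh hum hb hpos hdis hE hratio
end

section
/- For smooth solutions with h > 0, the flux-gradient plus non-conservative product of the SWLME can be written via equilibrium variables: fₓ(u) + G(u)uₓ = L(u)·ṽₓ, where ṽ = (E, hu_m, α₁/h,...,α_N/h, 0) with E = u_m²/2 + g(h+b) + (3/2)Σᵢ αᵢ²/(2i+1), and L(u) is the explicit matrix with rows: row 1 = (0,1,0,...,0,0); row 2 = (h, u_m, -h²α₁/3,..., -h²α_N/(2N+1), 0); row i+2 = (0, 2αᵢ, 0,...,h²u_m (position i+2),...,0, 0); last row = (0,...,0,1). -/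
open Finset

/-!
The identity is the product rule combined with `h² (a/h)' = h a' - a h'`, valid where `h ≠ 0`.
The momentum component splits into the classical shallow-water identity
`(h u² + g h²/2)' + g h b' = h (u²/2 + g (h + b))' + u (h u)'` and, for each moment `a = αᵢ`,
the identity `(h a²)' = (3/2) h (a²)' - h² a (a/h)'`.
-/

section

variable {h u a b : ℝ → ℝ} {x : ℝ}

theorem sq_mul_deriv_div (hh : DifferentiableAt ℝ h x) (ha : DifferentiableAt ℝ a x)
    (hx : h x ≠ 0) :
    h x ^ 2 * deriv (fun y => a y / h y) x = h x * deriv a x - a x * deriv h x := by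
  rw [(ha.hasDerivAt.fun_div hh.hasDerivAt hx).deriv]
  field_simp

theorem deriv_mul_sq_eq_sub_sq_mul_deriv_div (hh : DifferentiableAt ℝ h x)
    (ha : DifferentiableAt ℝ a x) (hx : h x ≠ 0) :
    deriv (fun y => h y * a y ^ 2) x =
      3 / 2 * h x * deriv (fun y => a y ^ 2) x -
        h x ^ 2 * a x * deriv (fun y => a y / h y) x := by
  rw [(hh.hasDerivAt.fun_mul (ha.hasDerivAt.fun_pow 2)).deriv, (ha.hasDerivAt.fun_pow 2).deriv]
  linear_combination a x * sq_mul_deriv_div hh ha hx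

theorem sum_deriv_mul_sq_div {ι : Type*} (s : Finset ι) (α : ι → ℝ → ℝ) (c : ι → ℝ)
    (hh : DifferentiableAt ℝ h x) (hα : ∀ i ∈ s, DifferentiableAt ℝ (α i) x)
    (hx : h x ≠ 0) :
    ∑ i ∈ s, deriv (fun y => h y * α i y ^ 2) x / c i =
      h x * (3 / 2 * ∑ i ∈ s, deriv (fun y => α i y ^ 2) x / c i) -
        ∑ i ∈ s, h x ^ 2 * α i x / c i * deriv (fun y => α i y / h y) x := by
  rw [mul_sum, mul_sum, ← sum_sub_distrib]
  refine sum_congr rfl fun i hi => ?_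
  rw [deriv_mul_sq_eq_sub_sq_mul_deriv_div hh (hα i hi) hx]
  ring

theorem deriv_momentum_flux_add_topography (g : ℝ) (hh : DifferentiableAt ℝ h x)
    (hu : DifferentiableAt ℝ u x) (hb : DifferentiableAt ℝ b x) :
    deriv (fun y => h y * u y ^ 2 + g * h y ^ 2 / 2) x + g * h x * deriv b x =
      h x * deriv (fun y => u y ^ 2 / 2 + g * (h y + b y)) x +
        u x * deriv (fun y => h y * u y) x := by
  have dh := hh.hasDerivAt
  have du := hu.hasDerivAt
  rw [((dh.fun_mul (du.fun_pow 2)).fun_add (((dh.fun_pow 2).const_mul g).div_const 2)).deriv,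
    (((du.fun_pow 2).div_const 2).fun_add ((dh.fun_add hb.hasDerivAt).const_mul g)).deriv,
    (dh.fun_mul du).deriv]
  ring

theorem deriv_moment_flux_sub_nonconservative (hh : DifferentiableAt ℝ h x)
    (hu : DifferentiableAt ℝ u x) (ha : DifferentiableAt ℝ a x) (hx : h x ≠ 0) :
    deriv (fun y => 2 * h y * u y * a y) x - u x * deriv (fun y => h y * a y) x =
      2 * a x * deriv (fun y => h y * u y) x + h x ^ 2 * u x * deriv (fun y => a y / h y) x := by
  have dh := hh.hasDerivAt
  have du := hu.hasDerivAt
  have da := ha.hasDerivAt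
  rw [(((dh.const_mul 2).fun_mul du).fun_mul da).deriv, (dh.fun_mul da).deriv,
    (dh.fun_mul du).deriv]
  linear_combination -u x * sq_mul_deriv_div hh ha hx

end

theorem swlme_equilibrium_variable_identity_general
    (N : ℕ) (g : ℝ)
    (h um b : ℝ → ℝ) (α : ℕ → ℝ → ℝ)
    (hh : Differentiable ℝ h) (hum : Differentiable ℝ um) (hb : Differentiable ℝ b)
    (hα : ∀ i, Differentiable ℝ (α i))
    (hpos : ∀ x, 0 < h x) :
    -- first component: (h u_m)ₓ = (h u_m)ₓ
    (∀ x : ℝ, deriv (fun y => h y * um y) x = deriv (fun y => h y * um y) x) ∧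
    -- second component:
    -- (h u_m² + g h²/2 + Σᵢ h αᵢ²/(2i+1))ₓ + g h bₓ
    --   = h Eₓ + u_m (h u_m)ₓ - Σᵢ (h² αᵢ/(2i+1)) (αᵢ/h)ₓ
    (∀ x : ℝ,
      deriv (fun y => h y * (um y) ^ 2 + g * (h y) ^ 2 / 2 +
          ∑ i ∈ Finset.range N, h y * (α (i + 1) y) ^ 2 / (2 * (i : ℝ) + 3)) x +
        g * h x * deriv b x
      = h x * deriv (fun y => (um y) ^ 2 / 2 + g * (h y + b y) +
            (3 / 2) * ∑ i ∈ Finset.range N, (α (i + 1) y) ^ 2 / (2 * (i : ℝ) + 3)) x +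
        um x * deriv (fun y => h y * um y) x -
        ∑ i ∈ Finset.range N,
          (h x) ^ 2 * α (i + 1) x / (2 * (i : ℝ) + 3) *
            deriv (fun y => α (i + 1) y / h y) x) ∧
    -- moment components: (2 h u_m αᵢ)ₓ - u_m (h αᵢ)ₓ = 2 αᵢ (h u_m)ₓ + h² u_m (αᵢ/h)ₓ
    (∀ i ∈ Finset.range N, ∀ x : ℝ,
      deriv (fun y => 2 * h y * um y * α (i + 1) y) x -
          um x * deriv (fun y => h y * α (i + 1) y) x
        = 2 * α (i + 1) x * deriv (fun y => h y * um y) x +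
          (h x) ^ 2 * um x * deriv (fun y => α (i + 1) y / h y) x) ∧
    -- last component: 0 = (0)ₓ
    (∀ x : ℝ, (0 : ℝ) = deriv (fun _ : ℝ => (0 : ℝ)) x) := by
  refine ⟨fun x => rfl, fun x => ?_,
    fun i _ x => deriv_moment_flux_sub_nonconservative (hh x) (hum x) (hα _ x) (hpos x).ne',
    fun x => by simp⟩
  have hflux : HasDerivAt (fun y => h y * um y ^ 2 + g * h y ^ 2 / 2 +
      ∑ i ∈ range N, h y * α (i + 1) y ^ 2 / (2 * (i : ℝ) + 3))
      (deriv (fun y => h y * um y ^ 2 + g * h y ^ 2 / 2) x +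
        ∑ i ∈ range N, deriv (fun y => h y * α (i + 1) y ^ 2) x / (2 * (i : ℝ) + 3)) x :=
    (DifferentiableAt.hasDerivAt (by fun_prop)).add
      (HasDerivAt.fun_sum fun i _ => (DifferentiableAt.hasDerivAt (by fun_prop)).div_const _)
  have henergy : HasDerivAt (fun y => um y ^ 2 / 2 + g * (h y + b y) +
      3 / 2 * ∑ i ∈ range N, α (i + 1) y ^ 2 / (2 * (i : ℝ) + 3))
      (deriv (fun y => um y ^ 2 / 2 + g * (h y + b y)) x +
        3 / 2 * ∑ i ∈ range N, deriv (fun y => α (i + 1) y ^ 2) x / (2 * (i : ℝ) + 3)) x :=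
    (DifferentiableAt.hasDerivAt (by fun_prop)).add
      ((HasDerivAt.fun_sum fun i _ =>
        (DifferentiableAt.hasDerivAt (by fun_prop)).div_const _).const_mul _)
  rw [hflux.deriv, henergy.deriv]
  linear_combination deriv_momentum_flux_add_topography g (hh x) (hum x) (hb x) +
    sum_deriv_mul_sq_div (range N) (fun i => α (i + 1)) (fun i => 2 * (i : ℝ) + 3)
      (hh x) (fun i _ => hα _ x) (hpos x).ne'

/-- For smooth solutions with `h > 0`, the flux gradient plus non-conservative product of
the extended SWLME equals `L(u) ∂ₓ ṽ`, where `ṽ = (E, hu_m, α₁/h, …, α_N/h, 0)` and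
`L(u)` is the explicit matrix of the paper; the identity is stated componentwise. -/
theorem swlme_equilibrium_variable_identity
    (N : ℕ) (hN : 1 ≤ N) (g : ℝ) (hg : 0 < g)
    (h um b : ℝ → ℝ) (α : ℕ → ℝ → ℝ)
    (hh : Differentiable ℝ h) (hum : Differentiable ℝ um) (hb : Differentiable ℝ b)
    (hα : ∀ i, Differentiable ℝ (α i))
    (hpos : ∀ x, 0 < h x) :
    -- first component: (h u_m)ₓ = (h u_m)ₓ
    (∀ x : ℝ, deriv (fun y => h y * um y) x = deriv (fun y => h y * um y) x) ∧
    -- second component: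
    -- (h u_m² + g h²/2 + Σᵢ h αᵢ²/(2i+1))ₓ + g h bₓ
    --   = h Eₓ + u_m (h u_m)ₓ - Σᵢ (h² αᵢ/(2i+1)) (αᵢ/h)ₓ
    (∀ x : ℝ,
      deriv (fun y => h y * (um y) ^ 2 + g * (h y) ^ 2 / 2 +
          ∑ i ∈ Finset.range N, h y * (α (i + 1) y) ^ 2 / (2 * (i : ℝ) + 3)) x +
        g * h x * deriv b x
      = h x * deriv (fun y => (um y) ^ 2 / 2 + g * (h y + b y) +
            (3 / 2) * ∑ i ∈ Finset.range N, (α (i + 1) y) ^ 2 / (2 * (i : ℝ) + 3)) x +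
        um x * deriv (fun y => h y * um y) x -
        ∑ i ∈ Finset.range N,
          (h x) ^ 2 * α (i + 1) x / (2 * (i : ℝ) + 3) *
            deriv (fun y => α (i + 1) y / h y) x) ∧
    -- moment components: (2 h u_m αᵢ)ₓ - u_m (h αᵢ)ₓ = 2 αᵢ (h u_m)ₓ + h² u_m (αᵢ/h)ₓ
    (∀ i ∈ Finset.range N, ∀ x : ℝ,
      deriv (fun y => 2 * h y * um y * α (i + 1) y) x -
          um x * deriv (fun y => h y * α (i + 1) y) x
        = 2 * α (i + 1) x * deriv (fun y => h y * um y) x +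
          (h x) ^ 2 * um x * deriv (fun y => α (i + 1) y / h y) x) ∧
    -- last component: 0 = (0)ₓ
    (∀ x : ℝ, (0 : ℝ) = deriv (fun _ : ℝ => (0 : ℝ)) x) :=
  swlme_equilibrium_variable_identity_general N g h um b α hh hum hb hα hpos
end
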